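/- arXiv:2507.04847 — 2 statements merged into one kernel-verified Lean document; each statement's English description precedes it below -/
import Mathlib

section
/- Let L⋆ ∈ ℂ^{n1×r}, R⋆ ∈ ℂ^{n2×r}, V⋆ ∈ ℂ^{s×r} have orthonormal columns (L⋆^H L⋆ = R⋆^H R⋆ = V⋆^H V⋆ = I_r), let S⋆ ∈ ℂ^{r×r×r}, and set Z⋆ = (L⋆,R⋆,V⋆)·S⋆. Suppose ‖L⋆‖_{2,∞} ≤ √(μ0 c_s r / n) and ‖R⋆‖_{2,∞} ≤ √(μ0 c_s r / n) for some real μ0, c_s > 0. Then: (i) ‖Z⋆‖_∞ ≤ (μ0 c_s r / n) · σmax(Z⋆); and (ii) for i = 1, 2, both ‖Mi(Z⋆)‖_{2,∞} ≤ √(μ0 c_s r / n) · σmax(Z⋆) and ‖Mi(Z⋆)^H‖_{2,∞} ≤ √(μ0 c_s r / n) · σmax(Z⋆). -/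
noncomputable section

open scoped BigOperators

namespace MSCS

/-- `wgt n1 n2 a` = number of pairs `(i1,i2) ∈ [n1]×[n2]` with `i1+i2 = a`. -/
def wgt (n1 n2 a : ℕ) : ℕ :=
  ((Finset.univ : Finset (Fin n1 × Fin n2)).filter (fun q => q.1.1 + q.2.1 = a)).card

/-- The finset of pairs on the `a`-th skew diagonal. -/
def skew (n1 n2 a : ℕ) : Finset (Fin n1 × Fin n2) :=
  (Finset.univ : Finset (Fin n1 × Fin n2)).filter (fun q => q.1.1 + q.2.1 = a)

def addIdx {n1 n2 n : ℕ} (hn : n1 + n2 = n + 1) (i1 : Fin n1) (i2 : Fin n2) : Fin n :=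
  ⟨i1.1 + i2.1, by have h1 := i1.2; have h2 := i2.2; omega⟩

def revIdx {m : ℕ} (v : Fin m) : Fin m :=
  ⟨m - 1 - v.1, by have := v.2; omega⟩

def idxLo {a b : ℕ} (c : Fin (b * a)) : Fin a :=
  ⟨c.1 % a, by
    have h : (c : ℕ) < b * a := c.2
    have ha : 0 < a := by
      have hpos : 0 < b * a := lt_of_le_of_lt (Nat.zero_le _) h
      exact Nat.pos_of_ne_zero (fun h0 => by simp [h0] at hpos)
    exact Nat.mod_lt _ ha⟩

def idxHi {a b : ℕ} (c : Fin (b * a)) : Fin b :=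
  ⟨c.1 / a, Nat.div_lt_of_lt_mul (by rw [Nat.mul_comm a b]; exact c.2)⟩

/-- Mode-1 matricization: `[M1 T](i1, i2 + i3·d2) = T i1 i2 i3`. -/
def m1 {d1 d2 d3 : ℕ} (T : Fin d1 → Fin d2 → Fin d3 → ℂ) :
    Matrix (Fin d1) (Fin (d3 * d2)) ℂ :=
  Matrix.of fun i c => T i (idxLo c) (idxHi c)

/-- Mode-2 matricization: `[M2 T](i2, i1 + i3·d1) = T i1 i2 i3`. -/
def m2 {d1 d2 d3 : ℕ} (T : Fin d1 → Fin d2 → Fin d3 → ℂ) :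
    Matrix (Fin d2) (Fin (d3 * d1)) ℂ :=
  Matrix.of fun i c => T (idxLo c) i (idxHi c)

/-- Mode-3 matricization: `[M3 T](i3, i1 + i2·d1) = T i1 i2 i3`. -/
def m3 {d1 d2 d3 : ℕ} (T : Fin d1 → Fin d2 → Fin d3 → ℂ) :
    Matrix (Fin d3) (Fin (d2 * d1)) ℂ :=
  Matrix.of fun i c => T (idxLo c) (idxHi c) i

/-- Kronecker product with flattened indices:
`(A ⊗ B)(iA·u + k, jA·v + l) = A(iA,jA) · B(k,l)`. -/
def kron {p q u v : ℕ} (A : Matrix (Fin p) (Fin q) ℂ) (B : Matrix (Fin u) (Fin v) ℂ) :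
    Matrix (Fin (p * u)) (Fin (q * v)) ℂ :=
  Matrix.of fun i j => A (idxHi i) (idxHi j) * B (idxLo i) (idxLo j)

def mode1 {d1 d2 d3 k : ℕ} (T : Fin d1 → Fin d2 → Fin d3 → ℂ)
    (A : Matrix (Fin k) (Fin d1) ℂ) : Fin k → Fin d2 → Fin d3 → ℂ :=
  fun j i2 i3 => ∑ i1, T i1 i2 i3 * A j i1

def mode2 {d1 d2 d3 k : ℕ} (T : Fin d1 → Fin d2 → Fin d3 → ℂ)
    (A : Matrix (Fin k) (Fin d2) ℂ) : Fin d1 → Fin k → Fin d3 → ℂ :=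
  fun i1 j i3 => ∑ i2, T i1 i2 i3 * A j i2

def mode3 {d1 d2 d3 k : ℕ} (T : Fin d1 → Fin d2 → Fin d3 → ℂ)
    (A : Matrix (Fin k) (Fin d3) ℂ) : Fin d1 → Fin d2 → Fin k → ℂ :=
  fun i1 i2 j => ∑ i3, T i1 i2 i3 * A j i3

/-- Tucker product `(L,R,V)·S`. -/
def tucker {n1 n2 s r1 r2 r3 : ℕ} (L : Matrix (Fin n1) (Fin r1) ℂ)
    (R : Matrix (Fin n2) (Fin r2) ℂ) (V : Matrix (Fin s) (Fin r3) ℂ)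
    (S : Fin r1 → Fin r2 → Fin r3 → ℂ) : Fin n1 → Fin n2 → Fin s → ℂ :=
  fun i1 i2 i3 => ∑ j1, ∑ j2, ∑ j3, S j1 j2 j3 * L i1 j1 * R i2 j2 * V i3 j3

/-- Hankel tensor basis element. -/
def Hbasis {n1 n2 s n : ℕ} (k : Fin n) (j : Fin s) : Fin n1 → Fin n2 → Fin s → ℂ :=
  fun i1 i2 i3 =>
    if i1.1 + i2.1 = k.1 ∧ i3 = j then 1 / (Real.sqrt (wgt n1 n2 k.1) : ℂ) else 0

/-- Reweighted Hankel lifting. -/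
def Ghankel {n1 n2 s n : ℕ} (hn : n1 + n2 = n + 1) (M : Matrix (Fin s) (Fin n) ℂ) :
    Fin n1 → Fin n2 → Fin s → ℂ :=
  fun i1 i2 k => M k (addIdx hn i1 i2) / (Real.sqrt (wgt n1 n2 (i1.1 + i2.1)) : ℂ)

/-- Adjoint Hankel de-lifting. -/
def Gstar {n1 n2 t : ℕ} (n : ℕ) (T : Fin n1 → Fin n2 → Fin t → ℂ) :
    Matrix (Fin t) (Fin n) ℂ :=
  Matrix.of fun k a =>
    (1 / (Real.sqrt (wgt n1 n2 a.1) : ℂ)) * ∑ q ∈ skew n1 n2 a.1, T q.1 q.2 k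

/-- Frobenius inner product of tensors. -/
def tinner {d1 d2 d3 : ℕ} (T1 T2 : Fin d1 → Fin d2 → Fin d3 → ℂ) : ℂ :=
  ∑ i1, ∑ i2, ∑ i3, (starRingEnd ℂ) (T1 i1 i2 i3) * T2 i1 i2 i3

/-- Frobenius inner product of matrices. -/
def minner {m n : ℕ} (X Y : Matrix (Fin m) (Fin n) ℂ) : ℂ :=
  ∑ i, ∑ j, (starRingEnd ℂ) (X i j) * Y i j

/-- Frobenius norm of a tensor. -/
def frobT {d1 d2 d3 : ℕ} (T : Fin d1 → Fin d2 → Fin d3 → ℂ) : ℝ :=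
  Real.sqrt (∑ i1, ∑ i2, ∑ i3, ‖T i1 i2 i3‖ ^ 2)

/-- Frobenius norm of a matrix. -/
def frobM {m n : ℕ} (A : Matrix (Fin m) (Fin n) ℂ) : ℝ :=
  Real.sqrt (∑ i, ∑ j, ‖A i j‖ ^ 2)

/-- Spectral (ℓ2 operator) norm of a matrix. -/
def specNorm {m n : ℕ} (A : Matrix (Fin m) (Fin n) ℂ) : ℝ :=
  ‖(Matrix.toEuclideanLin A).toContinuousLinearMap‖

/-- `‖·‖_{2,∞}`: maximum ℓ2 norm of a row. -/
def twoInf {m n : ℕ} (A : Matrix (Fin m) (Fin n) ℂ) : ℝ :=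
  ⨆ i, Real.sqrt (∑ j, ‖A i j‖ ^ 2)

/-- `σmax(T) = max of spectral norms of the three matricizations`. -/
def sigmaMax {d1 d2 d3 : ℕ} (T : Fin d1 → Fin d2 → Fin d3 → ℂ) : ℝ :=
  max (specNorm (m1 T)) (max (specNorm (m2 T)) (specNorm (m3 T)))

/-- Entrywise complex conjugate of a matrix. -/
def conjM {m n : ℕ} (A : Matrix (Fin m) (Fin n) ℂ) : Matrix (Fin m) (Fin n) ℂ :=
  Matrix.of fun i j => (starRingEnd ℂ) (A i j)


open Matrix
open scoped Matrix.Norms.L2Operator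

lemma specNorm_eq {m n : ℕ} (A : Matrix (Fin m) (Fin n) ℂ) : specNorm A = ‖A‖ := rfl

lemma specNorm_nonneg {m n : ℕ} (A : Matrix (Fin m) (Fin n) ℂ) : 0 ≤ specNorm A :=
  norm_nonneg _

lemma specNorm_conjTranspose {m n : ℕ} (A : Matrix (Fin m) (Fin n) ℂ) :
    specNorm Aᴴ = specNorm A := by
  rw [specNorm_eq, specNorm_eq]; exact Matrix.l2_opNorm_conjTranspose A

lemma specNorm_mul_le {m n p : ℕ} (A : Matrix (Fin m) (Fin n) ℂ)
    (B : Matrix (Fin n) (Fin p) ℂ) :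
    specNorm (A * B) ≤ specNorm A * specNorm B := by
  rw [specNorm_eq, specNorm_eq, specNorm_eq]; exact Matrix.l2_opNorm_mul A B

lemma norm_mulVec_le {p q : ℕ} (A : Matrix (Fin p) (Fin q) ℂ) (x : Fin q → ℂ) :
    Real.sqrt (∑ i, ‖A.mulVec x i‖ ^ 2) ≤ specNorm A * Real.sqrt (∑ j, ‖x j‖ ^ 2) := by
  have h := Matrix.l2_opNorm_mulVec A ((EuclideanSpace.equiv (Fin q) ℂ).symm x)
  rw [EuclideanSpace.norm_eq, EuclideanSpace.norm_eq] at h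
  exact h

lemma specNorm_le_one {m r : ℕ} (A : Matrix (Fin m) (Fin r) ℂ)
    (hA : Aᴴ * A = 1) : specNorm A ≤ 1 := by
  have h1 : ‖Aᴴ * A‖ = ‖A‖ * ‖A‖ := Matrix.l2_opNorm_conjTranspose_mul_self A
  rw [hA] at h1
  have h2 : ‖(1 : Matrix (Fin r) (Fin r) ℂ)‖ ≤ 1 := by
    rw [Matrix.l2_opNorm_def]
    refine ContinuousLinearMap.opNorm_le_bound _ zero_le_one ?_
    intro x
    rw [one_mul]
    have hx : (Matrix.toEuclideanLin (1 : Matrix (Fin r) (Fin r) ℂ)) x = x := by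
      rw [Matrix.toEuclideanLin_apply, Matrix.one_mulVec]
    change ‖(Matrix.toEuclideanLin (1 : Matrix (Fin r) (Fin r) ℂ)) x‖ ≤ ‖x‖
    rw [hx]
  have h3 : ‖A‖ * ‖A‖ ≤ 1 := h1 ▸ h2
  rw [specNorm_eq]
  nlinarith [norm_nonneg A, h3]

lemma cs_sum {q : ℕ} (f g : Fin q → ℂ) :
    ‖∑ j, f j * g j‖ ≤ Real.sqrt (∑ j, ‖f j‖ ^ 2) * Real.sqrt (∑ j, ‖g j‖ ^ 2) := by
  calc ‖∑ j, f j * g j‖ ≤ ∑ j, ‖f j‖ * ‖g j‖ := by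
        refine (norm_sum_le _ _).trans (le_of_eq ?_)
        simp [norm_mul]
    _ ≤ _ := by
        rw [← Real.sqrt_mul (by positivity)]
        rw [Real.le_sqrt (by positivity) (by positivity)]
        exact Finset.sum_mul_sq_le_sq_mul_sq Finset.univ _ _

lemma idxLo_pair {a b : ℕ} (j : Fin b) (i : Fin a) :
    idxLo (finProdFinEquiv (j, i)) = i := by
  ext
  simp only [idxLo, finProdFinEquiv_apply_val]
  exact (Nat.add_mul_mod_self_left i.1 a j.1).trans (Nat.mod_eq_of_lt i.2)

lemma idxHi_pair {a b : ℕ} (j : Fin b) (i : Fin a) :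
    idxHi (finProdFinEquiv (j, i)) = j := by
  have ha : 0 < a := i.pos
  ext
  simp only [idxHi, finProdFinEquiv_apply_val]
  rw [Nat.add_mul_div_left _ _ ha, Nat.div_eq_of_lt i.2, Nat.zero_add]

lemma idx_ext {a b : ℕ} {c c' : Fin (b * a)}
    (h1 : idxHi c = idxHi c') (h2 : idxLo c = idxLo c') : c = c' := by
  have e1 : c.1 / a = c'.1 / a := congrArg Fin.val h1
  have e2 : c.1 % a = c'.1 % a := congrArg Fin.val h2
  ext
  rw [← Nat.mod_add_div c.1 a, ← Nat.mod_add_div c'.1 a, e1, e2]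

lemma sum_fin_mul {a b : ℕ} {M : Type*} [AddCommMonoid M] (f : Fin (b * a) → M) :
    ∑ c, f c = ∑ j : Fin b, ∑ i : Fin a, f (finProdFinEquiv (j, i)) := by
  rw [← finProdFinEquiv.sum_comp (fun c => f c), Fintype.sum_prod_type]

lemma kron_iso {t b rt rb : ℕ} (Vm : Matrix (Fin t) (Fin rt) ℂ) (B : Matrix (Fin b) (Fin rb) ℂ)
    (hV : Vmᴴ * Vm = 1) (hB : Bᴴ * B = 1) :
    (kron Vm B)ᴴ * kron Vm B = 1 := by
  ext d d'
  have hVe := congrFun (congrFun hV (idxHi d)) (idxHi d')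
  have hBe := congrFun (congrFun hB (idxLo d)) (idxLo d')
  simp only [Matrix.mul_apply, Matrix.conjTranspose_apply, kron, Matrix.of_apply] at hVe hBe ⊢
  calc ∑ c, (starRingEnd ℂ) (Vm (idxHi c) (idxHi d) * B (idxLo c) (idxLo d)) *
        (Vm (idxHi c) (idxHi d') * B (idxLo c) (idxLo d'))
      = ∑ k : Fin t, ∑ y : Fin b,
          ((starRingEnd ℂ) (Vm k (idxHi d)) * Vm k (idxHi d')) *
          ((starRingEnd ℂ) (B y (idxLo d)) * B y (idxLo d')) := by
        rw [sum_fin_mul]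
        refine Finset.sum_congr rfl fun k _ => Finset.sum_congr rfl fun y _ => ?_
        rw [idxHi_pair, idxLo_pair]
        simp only [_root_.map_mul]; ring
    _ = (1 : Matrix (Fin rt) (Fin rt) ℂ) (idxHi d) (idxHi d') *
        (1 : Matrix (Fin rb) (Fin rb) ℂ) (idxLo d) (idxLo d') := by
        rw [← hVe, ← hBe, ← Finset.sum_mul_sum]; rfl
    _ = (1 : Matrix (Fin (rt * rb)) (Fin (rt * rb)) ℂ) d d' := by
        simp only [Matrix.one_apply]
        by_cases h : d = d'
        · subst h; simp
        · have hne : ¬(idxHi d = idxHi d' ∧ idxLo d = idxLo d') := by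
            intro ⟨h1, h2⟩; exact h (idx_ext h1 h2)
          rw [if_neg h]
          by_cases h1 : idxHi d = idxHi d'
          · rw [if_neg (fun h2 => hne ⟨h1, h2⟩), if_pos h1, one_mul]
          · rw [if_neg h1, zero_mul]

lemma conjM_conjTranspose {p q : ℕ} (K : Matrix (Fin p) (Fin q) ℂ) :
    (conjM K)ᴴ = Kᵀ := by
  ext i j; simp [conjM, Matrix.conjTranspose_apply]

lemma transpose_mul_conjM {p q : ℕ} (K : Matrix (Fin p) (Fin q) ℂ)
    (hK : Kᴴ * K = 1) : Kᵀ * conjM K = 1 := by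
  ext d d'
  have h := congrFun (congrFun hK d') d
  simp only [Matrix.mul_apply, Matrix.conjTranspose_apply, Matrix.transpose_apply,
    conjM, Matrix.of_apply, Matrix.one_apply] at h ⊢
  calc ∑ c, K c d * (starRingEnd ℂ) (K c d')
      = ∑ c, (starRingEnd ℂ) (K c d') * K c d :=
        Finset.sum_congr rfl fun c _ => mul_comm _ _
    _ = if d' = d then 1 else 0 := h
    _ = if d = d' then 1 else 0 := by simp [eq_comm]

lemma conjM_iso {p q : ℕ} (K : Matrix (Fin p) (Fin q) ℂ)
    (hK : Kᴴ * K = 1) : (conjM K)ᴴ * conjM K = 1 := by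
  rw [conjM_conjTranspose]
  exact transpose_mul_conjM K hK

/-- Master factorization. -/
lemma matricize_factor {a b t ra rb rt : ℕ}
    (A : Matrix (Fin a) (Fin ra) ℂ) (B : Matrix (Fin b) (Fin rb) ℂ)
    (Vm : Matrix (Fin t) (Fin rt) ℂ) (C : Fin ra → Fin rb → Fin rt → ℂ)
    (M : Matrix (Fin a) (Fin (t * b)) ℂ)
    (hM : ∀ i c, M i c =
      ∑ u, ∑ v, ∑ w, C u v w * A i u * B (idxLo c) v * Vm (idxHi c) w) :
    M = A * m1 C * (kron Vm B)ᵀ := by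
  ext i c
  rw [hM]
  simp only [Matrix.mul_apply, Matrix.transpose_apply, kron, m1, Matrix.of_apply]
  conv_rhs => rw [sum_fin_mul (a := rb) (b := rt)]
  simp only [idxHi_pair, idxLo_pair]
  conv_rhs => rw [Finset.sum_comm]
  conv_lhs => rw [Finset.sum_comm]
  refine Finset.sum_congr rfl fun v _ => ?_
  conv_lhs => rw [Finset.sum_comm]
  refine Finset.sum_congr rfl fun w _ => ?_
  rw [Finset.sum_mul]
  refine Finset.sum_congr rfl fun u _ => ?_
  ring

lemma rowNorm_le_twoInf {m n : ℕ} (A : Matrix (Fin m) (Fin n) ℂ) (i : Fin m) :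
    Real.sqrt (∑ j, ‖A i j‖ ^ 2) ≤ twoInf A := by
  have h := le_ciSup (f := fun i => Real.sqrt (∑ j, ‖A i j‖ ^ 2))
    (Set.Finite.bddAbove (Set.finite_range _)) i
  simpa [twoInf] using h

lemma rowNorm_le_one {m r : ℕ} (V : Matrix (Fin m) (Fin r) ℂ) (hV : Vᴴ * V = 1) (i : Fin m) :
    Real.sqrt (∑ j, ‖V i j‖ ^ 2) ≤ 1 := by
  have key : Vᴴ.mulVec (Pi.single i 1) = fun j => (starRingEnd ℂ) (V i j) := by
    funext j
    simp [Matrix.mulVec, dotProduct, Matrix.conjTranspose_apply, Pi.single_apply,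
      Finset.sum_ite_eq, mul_ite]
  have h := norm_mulVec_le Vᴴ (Pi.single i 1)
  rw [key] at h
  have h1 : ∑ j, ‖(starRingEnd ℂ) (V i j)‖ ^ 2 = ∑ j, ‖V i j‖ ^ 2 := by
    simp [RCLike.norm_conj]
  have h2 : (∑ k, ‖(Pi.single i 1 : Fin m → ℂ) k‖ ^ 2) = 1 := by
    simp [Pi.single_apply, apply_ite]
  rw [h1, h2, Real.sqrt_one, mul_one] at h
  calc Real.sqrt (∑ j, ‖V i j‖ ^ 2) ≤ specNorm Vᴴ := h
    _ = specNorm V := specNorm_conjTranspose V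
    _ ≤ 1 := specNorm_le_one V hV

lemma kron_row_sq {t b rt rb : ℕ} (Vm : Matrix (Fin t) (Fin rt) ℂ)
    (B : Matrix (Fin b) (Fin rb) ℂ) (c : Fin (t * b)) :
    ∑ d, ‖kron Vm B c d‖ ^ 2 =
      (∑ w, ‖Vm (idxHi c) w‖ ^ 2) * (∑ v, ‖B (idxLo c) v‖ ^ 2) := by
  rw [sum_fin_mul (a := rb) (b := rt), Finset.sum_mul_sum]
  refine Finset.sum_congr rfl fun w _ => Finset.sum_congr rfl fun v _ => ?_
  simp only [kron, Matrix.of_apply, idxHi_pair, idxLo_pair, norm_mul]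
  ring

/-- The main bound package for a factored matricization. -/
lemma package {a b t ra rb rt : ℕ}
    (A : Matrix (Fin a) (Fin ra) ℂ) (B : Matrix (Fin b) (Fin rb) ℂ)
    (Vm : Matrix (Fin t) (Fin rt) ℂ) (C : Fin ra → Fin rb → Fin rt → ℂ)
    (M : Matrix (Fin a) (Fin (t * b)) ℂ)
    (hA : Aᴴ * A = 1) (hB : Bᴴ * B = 1) (hV : Vmᴴ * Vm = 1)
    (hM : M = A * m1 C * (kron Vm B)ᵀ)
    (κ σ : ℝ) (hκ : 0 ≤ κ) (hσ : specNorm M ≤ σ)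
    (hArow : ∀ i, Real.sqrt (∑ u, ‖A i u‖ ^ 2) ≤ κ)
    (hBrow : ∀ y, Real.sqrt (∑ v, ‖B y v‖ ^ 2) ≤ κ) :
    (∀ i c, ‖M i c‖ ≤ κ ^ 2 * σ) ∧ twoInf M ≤ κ * σ ∧ twoInf Mᴴ ≤ κ * σ := by
  have hσ0 : 0 ≤ σ := le_trans (specNorm_nonneg M) hσ
  set K := kron Vm B with hKdef
  have hK : Kᴴ * K = 1 := kron_iso Vm B hV hB
  have hKc : (conjM K)ᴴ * conjM K = 1 := conjM_iso K hK
  have hKt : Kᵀ * conjM K = 1 := transpose_mul_conjM K hK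
  have hA1 : specNorm A ≤ 1 := specNorm_le_one A hA
  have hAH1 : specNorm Aᴴ ≤ 1 := by rw [specNorm_conjTranspose]; exact hA1
  have hKc1 : specNorm (conjM K) ≤ 1 := specNorm_le_one _ hKc
  have hG : A * m1 C = M * conjM K := by
    rw [hM, Matrix.mul_assoc, hKt, Matrix.mul_one]
  have hGσ : specNorm (A * m1 C) ≤ σ := by
    rw [hG]
    calc specNorm (M * conjM K) ≤ specNorm M * specNorm (conjM K) := specNorm_mul_le _ _
      _ ≤ σ * 1 := mul_le_mul hσ hKc1 (specNorm_nonneg _) hσ0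
      _ = σ := mul_one σ
  have hW : m1 C * Kᵀ = Aᴴ * M := by
    rw [hM, ← Matrix.mul_assoc, ← Matrix.mul_assoc, hA, Matrix.one_mul]
  have hWσ : specNorm (m1 C * Kᵀ) ≤ σ := by
    rw [hW]
    calc specNorm (Aᴴ * M) ≤ specNorm Aᴴ * specNorm M := specNorm_mul_le _ _
      _ ≤ 1 * σ := mul_le_mul hAH1 hσ (specNorm_nonneg _) zero_le_one
      _ = σ := one_mul σ
  have hSσ : specNorm (m1 C) ≤ σ := by
    have hrw : m1 C = Aᴴ * (A * m1 C) := by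
      rw [← Matrix.mul_assoc, hA, Matrix.one_mul]
    rw [hrw]
    calc specNorm (Aᴴ * (A * m1 C)) ≤ specNorm Aᴴ * specNorm (A * m1 C) := specNorm_mul_le _ _
      _ ≤ 1 * σ := mul_le_mul hAH1 hGσ (specNorm_nonneg _) zero_le_one
      _ = σ := one_mul σ
  have hKrow : ∀ c, Real.sqrt (∑ d, ‖K c d‖ ^ 2) ≤ κ := by
    intro c
    rw [hKdef, kron_row_sq, Real.sqrt_mul (by positivity)]
    calc Real.sqrt (∑ w, ‖Vm (idxHi c) w‖ ^ 2) * Real.sqrt (∑ v, ‖B (idxLo c) v‖ ^ 2)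
        ≤ 1 * κ := mul_le_mul (rowNorm_le_one Vm hV _) (hBrow _) (Real.sqrt_nonneg _) zero_le_one
      _ = κ := one_mul κ
  refine ⟨?_, ?_, ?_⟩
  · -- entrywise bound
    intro i c
    have hMe : M i c = ∑ u, A i u * ((m1 C).mulVec (fun d => K c d)) u := by
      rw [hM]
      simp only [Matrix.mul_apply, Matrix.mulVec, dotProduct, Matrix.transpose_apply,
        Finset.sum_mul, Finset.mul_sum]
      rw [Finset.sum_comm]
      exact Finset.sum_congr rfl fun u _ => Finset.sum_congr rfl fun d _ => by ring
    rw [hMe]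
    calc ‖∑ u, A i u * ((m1 C).mulVec (fun d => K c d)) u‖
        ≤ Real.sqrt (∑ u, ‖A i u‖ ^ 2) *
          Real.sqrt (∑ u, ‖((m1 C).mulVec (fun d => K c d)) u‖ ^ 2) := cs_sum _ _
      _ ≤ κ * (specNorm (m1 C) * Real.sqrt (∑ d, ‖K c d‖ ^ 2)) := by
          refine mul_le_mul (hArow i) (norm_mulVec_le _ _) (Real.sqrt_nonneg _) hκ
      _ ≤ κ * (σ * κ) := by
          refine mul_le_mul_of_nonneg_left ?_ hκ
          exact mul_le_mul hSσ (hKrow c) (Real.sqrt_nonneg _) hσ0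
      _ = κ ^ 2 * σ := by ring
  · -- twoInf M
    refine Real.iSup_le (fun i => ?_) (by positivity)
    have hrow : ((m1 C * Kᵀ)ᴴ).mulVec (star (A i)) =
        fun c => (starRingEnd ℂ) (M i c) := by
      funext c
      have hMic : M i c = ∑ u, A i u * (m1 C * Kᵀ) u c := by
        rw [hM, Matrix.mul_assoc, Matrix.mul_apply]
      rw [hMic]
      simp only [Matrix.mulVec, dotProduct, Matrix.conjTranspose_apply,
        Pi.star_apply, map_sum, _root_.map_mul]
      refine Finset.sum_congr rfl fun u _ => ?_
      rw [mul_comm]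
      rfl
    have h := norm_mulVec_le ((m1 C * Kᵀ)ᴴ) (star (A i))
    rw [hrow] at h
    have e1 : ∑ c, ‖(starRingEnd ℂ) (M i c)‖ ^ 2 = ∑ c, ‖M i c‖ ^ 2 := by
      simp [RCLike.norm_conj]
    have e2 : ∑ u, ‖(star (A i) : Fin ra → ℂ) u‖ ^ 2 = ∑ u, ‖A i u‖ ^ 2 := by
      simp [RCLike.norm_conj]
    rw [e1, e2] at h
    calc Real.sqrt (∑ c, ‖M i c‖ ^ 2)
        ≤ specNorm ((m1 C * Kᵀ)ᴴ) * Real.sqrt (∑ u, ‖A i u‖ ^ 2) := h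
      _ ≤ σ * κ := by
          refine mul_le_mul ?_ (hArow i) (Real.sqrt_nonneg _) hσ0
          rw [specNorm_conjTranspose]; exact hWσ
      _ = κ * σ := mul_comm σ κ
  · -- twoInf Mᴴ
    refine Real.iSup_le (fun c => ?_) (by positivity)
    have hcol : (A * m1 C).mulVec (fun d => K c d) = fun i => M i c := by
      funext i
      rw [hM, Matrix.mul_apply]
      simp only [Matrix.mulVec, dotProduct, Matrix.transpose_apply]
    have h := norm_mulVec_le (A * m1 C) (fun d => K c d)
    rw [hcol] at h
    have e1 : ∑ i, ‖Mᴴ c i‖ ^ 2 = ∑ i, ‖M i c‖ ^ 2 := by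
      simp [Matrix.conjTranspose_apply, RCLike.norm_conj]
    rw [e1]
    calc Real.sqrt (∑ i, ‖M i c‖ ^ 2)
        ≤ specNorm (A * m1 C) * Real.sqrt (∑ d, ‖K c d‖ ^ 2) := h
      _ ≤ σ * κ := mul_le_mul hGσ (hKrow c) (Real.sqrt_nonneg _) hσ0
      _ = κ * σ := mul_comm σ κ

/-- incoherence consequences for `Z⋆ = (L⋆,R⋆,V⋆)·S⋆` with
orthonormal factors and incoherent `L⋆`, `R⋆`. -/
theorem statement8 (n1 n2 s r n : ℕ) (hn : n1 + n2 = n + 1)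
    (μ0 cs : ℝ) (hμ : 0 < μ0) (hcs : 0 < cs)
    (L : Matrix (Fin n1) (Fin r) ℂ) (R : Matrix (Fin n2) (Fin r) ℂ)
    (V : Matrix (Fin s) (Fin r) ℂ) (S : Fin r → Fin r → Fin r → ℂ)
    (hL : L.conjTranspose * L = 1) (hR : R.conjTranspose * R = 1)
    (hV : V.conjTranspose * V = 1)
    (hLinc : twoInf L ≤ Real.sqrt (μ0 * cs * (r : ℝ) / (n : ℝ)))
    (hRinc : twoInf R ≤ Real.sqrt (μ0 * cs * (r : ℝ) / (n : ℝ)))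
    (Z : Fin n1 → Fin n2 → Fin s → ℂ) (hZ : Z = tucker L R V S) :
    (∀ i1 i2 i3, ‖Z i1 i2 i3‖ ≤ μ0 * cs * (r : ℝ) / (n : ℝ) * sigmaMax Z) ∧
    twoInf (m1 Z) ≤ Real.sqrt (μ0 * cs * (r : ℝ) / (n : ℝ)) * sigmaMax Z ∧
    twoInf ((m1 Z).conjTranspose) ≤ Real.sqrt (μ0 * cs * (r : ℝ) / (n : ℝ)) * sigmaMax Z ∧
    twoInf (m2 Z) ≤ Real.sqrt (μ0 * cs * (r : ℝ) / (n : ℝ)) * sigmaMax Z ∧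
    twoInf ((m2 Z).conjTranspose) ≤ Real.sqrt (μ0 * cs * (r : ℝ) / (n : ℝ)) * sigmaMax Z := by
  have hκ0 : 0 ≤ μ0 * cs * (r : ℝ) / (n : ℝ) := by positivity
  set κ := Real.sqrt (μ0 * cs * (r : ℝ) / (n : ℝ)) with hκdef
  have hκ : 0 ≤ κ := Real.sqrt_nonneg _
  have hArow1 : ∀ i, Real.sqrt (∑ u, ‖L i u‖ ^ 2) ≤ κ :=
    fun i => le_trans (rowNorm_le_twoInf L i) hLinc
  have hBrow1 : ∀ y, Real.sqrt (∑ v, ‖R y v‖ ^ 2) ≤ κ :=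
    fun y => le_trans (rowNorm_le_twoInf R y) hRinc
  -- mode 1 factorization
  have hM1 : m1 Z = L * m1 S * (kron V R)ᵀ := by
    apply matricize_factor
    intro i c
    rw [hZ]
    rfl
  have hσ1 : specNorm (m1 Z) ≤ sigmaMax Z := le_max_left _ _
  obtain ⟨hE, hT1, hT1'⟩ :=
    package L R V S (m1 Z) hL hR hV hM1 κ (sigmaMax Z) hκ hσ1 hArow1 hBrow1
  -- mode 2 factorization
  have hM2 : m2 Z = R * m1 (fun u v w => S v u w) * (kron V L)ᵀ := by
    apply matricize_factor
    intro i c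
    rw [hZ]
    show (∑ j1, ∑ j2, ∑ j3, S j1 j2 j3 * L (idxLo c) j1 * R i j2 * V (idxHi c) j3) = _
    conv_lhs => rw [Finset.sum_comm]
    refine Finset.sum_congr rfl fun u _ => Finset.sum_congr rfl fun v _ =>
      Finset.sum_congr rfl fun w _ => ?_
    show S v u w * L (idxLo c) v * R i u * V (idxHi c) w =
      S v u w * R i u * L (idxLo c) v * V (idxHi c) w
    ring
  have hσ2 : specNorm (m2 Z) ≤ sigmaMax Z :=
    le_trans (le_max_left _ _) (le_max_right _ _)
  obtain ⟨_, hT2, hT2'⟩ :=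
    package R L V _ (m2 Z) hR hL hV hM2 κ (sigmaMax Z) hκ hσ2 hBrow1 hArow1
  refine ⟨?_, hT1, hT1', hT2, hT2'⟩
  intro i1 i2 i3
  have hc : Z i1 i2 i3 = m1 Z i1 (finProdFinEquiv (i3, i2)) := by
    show Z i1 i2 i3 = Z i1 (idxLo (finProdFinEquiv (i3, i2))) (idxHi (finProdFinEquiv (i3, i2)))
    rw [idxLo_pair, idxHi_pair]
  rw [hc]
  calc ‖m1 Z i1 (finProdFinEquiv (i3, i2))‖ ≤ κ ^ 2 * sigmaMax Z := hE _ _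
    _ = μ0 * cs * (r : ℝ) / (n : ℝ) * sigmaMax Z := by
        rw [hκdef, Real.sq_sqrt hκ0]


end MSCS
end
end

section
/- Let P_L ∈ ℂ^{n1×n1}, P_R ∈ ℂ^{n2×n2}, P_V ∈ ℂ^{s×s} be orthogonal projections (Hermitian and idempotent), and write P_{L⊥} = I − P_L, P_{R⊥} = I − P_R, P_{V⊥} = I − P_V. Then for all tensors Z⋆, Z⁰ ∈ ℂ^{n1×n2×s}: ‖Z⋆ − Z⁰ ×1 P_L ×2 P_R ×3 P_V‖_F ≤ ‖P_{L⊥} M1(Z⋆)‖_F + ‖P_{R⊥} M2(Z⋆)‖_F + ‖P_{V⊥} M3(Z⋆)‖_F + ‖(Z⁰ − Z⋆) ×1 P_L ×2 P_R ×3 P_V‖_F. -/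
/-!
Write `𝒫 = ×₁ P_L ×₂ P_R ×₃ P_V`. Then `Z⋆ - 𝒫 Z⁰ = (Z⋆ - 𝒫 Z⋆) - 𝒫 (Z⁰ - Z⋆)`, and since mode
products along different modes commute, `Z⋆ - 𝒫 Z⋆` telescopes into
`Z⋆ ×₁ P_L⊥ + (Z⋆ ×₂ P_R⊥) ×₁ P_L + (Z⋆ ×₃ P_V⊥) ×₁ P_L ×₂ P_R`.
A mode-`k` product with `M` is left multiplication of the mode-`k` matricization by `M`, and
matricization preserves the Frobenius norm; an orthogonal projection does not increase the
Frobenius norm of a matrix (it contracts every column), so the outer projections can be dropped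
and the triangle inequality finishes.
-/

noncomputable section

open scoped BigOperators

namespace MSCS

open scoped Matrix

lemma norm_toLp_mulVec_le_of_isStarProjection {ι 𝕜 : Type*} [Fintype ι] [DecidableEq ι]
    [RCLike 𝕜] {P : Matrix ι ι 𝕜} (hP : IsStarProjection P) (v : ι → 𝕜) :
    ‖WithLp.toLp 2 (P *ᵥ v)‖ ≤ ‖WithLp.toLp 2 v‖ := by
  open scoped Matrix.Norms.L2Operator in
  exact (Matrix.l2_opNorm_mulVec P (WithLp.toLp 2 v)).trans
    (mul_le_of_le_one_left (norm_nonneg _) (hP.norm_le P))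

section Frobenius

variable {m n : ℕ}

lemma frobM_mul_le_of_isStarProjection {P : Matrix (Fin m) (Fin m) ℂ} (hP : IsStarProjection P)
    (A : Matrix (Fin m) (Fin n) ℂ) : frobM (P * A) ≤ frobM A := by
  refine Real.sqrt_le_sqrt ?_
  rw [Finset.sum_comm, Finset.sum_comm (f := fun i j => ‖A i j‖ ^ 2)]
  refine Finset.sum_le_sum fun j _ => ?_
  have hcol := norm_toLp_mulVec_le_of_isStarProjection hP (fun i => A i j)
  rw [EuclideanSpace.norm_eq, EuclideanSpace.norm_eq, Real.sqrt_le_sqrt_iff (by positivity)]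
    at hcol
  exact hcol

attribute [local instance] Matrix.frobeniusNormedAddCommGroup in
lemma frobM_eq_norm (A : Matrix (Fin m) (Fin n) ℂ) : frobM A = ‖A‖ := by
  rw [Matrix.frobenius_norm_def, frobM, Real.sqrt_eq_rpow]
  simp only [Real.rpow_two]

attribute [local instance] Matrix.frobeniusNormedAddCommGroup in
lemma frobM_add_le (A B : Matrix (Fin m) (Fin n) ℂ) : frobM (A + B) ≤ frobM A + frobM B := by
  simpa only [frobM_eq_norm] using norm_add_le A B

attribute [local instance] Matrix.frobeniusNormedAddCommGroup in
lemma frobM_sub_le (A B : Matrix (Fin m) (Fin n) ℂ) : frobM (A - B) ≤ frobM A + frobM B := by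
  simpa only [frobM_eq_norm] using norm_sub_le A B

end Frobenius

section Matricization

variable {d1 d2 d3 k : ℕ}

lemma sum_idxLo_idxHi {a b : ℕ} {M : Type*} [AddCommMonoid M] (f : Fin a → Fin b → M) :
    ∑ c : Fin (b * a), f (idxLo c) (idxHi c) = ∑ i, ∑ j, f i j := by
  calc ∑ c : Fin (b * a), f (idxLo c) (idxHi c)
      = ∑ p : Fin b × Fin a, f p.2 p.1 :=
        (finProdFinEquiv (m := b) (n := a)).symm.sum_comp fun p => f p.2 p.1
    _ = ∑ i, ∑ j, f i j := by rw [Fintype.sum_prod_type, Finset.sum_comm]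

lemma frobM_of_idxLo_idxHi {a b : ℕ} (F : Fin k → Fin a → Fin b → ℂ) :
    frobM (Matrix.of fun i (c : Fin (b * a)) => F i (idxLo c) (idxHi c))
      = √(∑ i, ∑ j, ∑ l, ‖F i j l‖ ^ 2) := by
  unfold frobM
  congr 1
  exact Finset.sum_congr rfl fun i _ => sum_idxLo_idxHi fun j l => ‖F i j l‖ ^ 2

lemma frobM_m1 (T : Fin d1 → Fin d2 → Fin d3 → ℂ) : frobM (m1 T) = frobT T :=
  frobM_of_idxLo_idxHi T

lemma frobM_m2 (T : Fin d1 → Fin d2 → Fin d3 → ℂ) : frobM (m2 T) = frobT T := by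
  rw [m2, frobM_of_idxLo_idxHi (fun i2 i1 i3 => T i1 i2 i3), frobT, Finset.sum_comm]

lemma frobM_m3 (T : Fin d1 → Fin d2 → Fin d3 → ℂ) : frobM (m3 T) = frobT T := by
  rw [m3, frobM_of_idxLo_idxHi (fun i3 i1 i2 => T i1 i2 i3), frobT, Finset.sum_comm]
  simp only [Finset.sum_comm (γ := Fin d3)]

lemma m1_add (X Y : Fin d1 → Fin d2 → Fin d3 → ℂ) : m1 (X + Y) = m1 X + m1 Y := rfl

lemma m1_sub (X Y : Fin d1 → Fin d2 → Fin d3 → ℂ) : m1 (X - Y) = m1 X - m1 Y := rfl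

lemma m2_sub (X Y : Fin d1 → Fin d2 → Fin d3 → ℂ) : m2 (X - Y) = m2 X - m2 Y := rfl

lemma m3_sub (X Y : Fin d1 → Fin d2 → Fin d3 → ℂ) : m3 (X - Y) = m3 X - m3 Y := rfl

lemma frobT_add_le (X Y : Fin d1 → Fin d2 → Fin d3 → ℂ) : frobT (X + Y) ≤ frobT X + frobT Y := by
  simpa only [← frobM_m1, m1_add] using frobM_add_le (m1 X) (m1 Y)

lemma frobT_sub_le (X Y : Fin d1 → Fin d2 → Fin d3 → ℂ) : frobT (X - Y) ≤ frobT X + frobT Y := by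
  simpa only [← frobM_m1, m1_sub] using frobM_sub_le (m1 X) (m1 Y)

lemma m1_mode1 (T : Fin d1 → Fin d2 → Fin d3 → ℂ) (A : Matrix (Fin k) (Fin d1) ℂ) :
    m1 (mode1 T A) = A * m1 T := by
  ext j c
  simp only [m1, mode1, Matrix.of_apply, Matrix.mul_apply, mul_comm]

lemma m2_mode2 (T : Fin d1 → Fin d2 → Fin d3 → ℂ) (A : Matrix (Fin k) (Fin d2) ℂ) :
    m2 (mode2 T A) = A * m2 T := by
  ext j c
  simp only [m2, mode2, Matrix.of_apply, Matrix.mul_apply, mul_comm]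

lemma m3_mode3 (T : Fin d1 → Fin d2 → Fin d3 → ℂ) (A : Matrix (Fin k) (Fin d3) ℂ) :
    m3 (mode3 T A) = A * m3 T := by
  ext j c
  simp only [m3, mode3, Matrix.of_apply, Matrix.mul_apply, mul_comm]

end Matricization

section ModeProducts

variable {d1 d2 d3 k : ℕ}

lemma mode1_sub (X Y : Fin d1 → Fin d2 → Fin d3 → ℂ) (A : Matrix (Fin k) (Fin d1) ℂ) :
    mode1 (X - Y) A = mode1 X A - mode1 Y A := by
  funext j i2 i3
  simp only [mode1, Pi.sub_apply, sub_mul, Finset.sum_sub_distrib]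

lemma mode2_sub (X Y : Fin d1 → Fin d2 → Fin d3 → ℂ) (A : Matrix (Fin k) (Fin d2) ℂ) :
    mode2 (X - Y) A = mode2 X A - mode2 Y A := by
  funext i1 j i3
  simp only [mode2, Pi.sub_apply, sub_mul, Finset.sum_sub_distrib]

lemma mode3_sub (X Y : Fin d1 → Fin d2 → Fin d3 → ℂ) (A : Matrix (Fin k) (Fin d3) ℂ) :
    mode3 (X - Y) A = mode3 X A - mode3 Y A := by
  funext i1 i2 j
  simp only [mode3, Pi.sub_apply, sub_mul, Finset.sum_sub_distrib]

lemma mode2_mode1 {k1 k2 : ℕ} (T : Fin d1 → Fin d2 → Fin d3 → ℂ)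
    (A : Matrix (Fin k1) (Fin d1) ℂ) (B : Matrix (Fin k2) (Fin d2) ℂ) :
    mode2 (mode1 T A) B = mode1 (mode2 T B) A := by
  funext j1 j2 i3
  simp only [mode1, mode2, Finset.sum_mul]
  rw [Finset.sum_comm]
  exact Finset.sum_congr rfl fun _ _ => Finset.sum_congr rfl fun _ _ => mul_right_comm _ _ _

lemma mode3_mode1 {k1 k3 : ℕ} (T : Fin d1 → Fin d2 → Fin d3 → ℂ)
    (A : Matrix (Fin k1) (Fin d1) ℂ) (C : Matrix (Fin k3) (Fin d3) ℂ) :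
    mode3 (mode1 T A) C = mode1 (mode3 T C) A := by
  funext j1 i2 j3
  simp only [mode1, mode3, Finset.sum_mul]
  rw [Finset.sum_comm]
  exact Finset.sum_congr rfl fun _ _ => Finset.sum_congr rfl fun _ _ => mul_right_comm _ _ _

lemma mode3_mode2 {k2 k3 : ℕ} (T : Fin d1 → Fin d2 → Fin d3 → ℂ)
    (B : Matrix (Fin k2) (Fin d2) ℂ) (C : Matrix (Fin k3) (Fin d3) ℂ) :
    mode3 (mode2 T B) C = mode2 (mode3 T C) B := by
  funext i1 j2 j3
  simp only [mode2, mode3, Finset.sum_mul]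
  rw [Finset.sum_comm]
  exact Finset.sum_congr rfl fun _ _ => Finset.sum_congr rfl fun _ _ => mul_right_comm _ _ _

lemma frobT_mode1_le_of_isStarProjection {P : Matrix (Fin d1) (Fin d1) ℂ}
    (hP : IsStarProjection P) (T : Fin d1 → Fin d2 → Fin d3 → ℂ) :
    frobT (mode1 T P) ≤ frobT T := by
  simpa only [← frobM_m1, m1_mode1] using frobM_mul_le_of_isStarProjection hP (m1 T)

lemma frobT_mode2_le_of_isStarProjection {P : Matrix (Fin d2) (Fin d2) ℂ}
    (hP : IsStarProjection P) (T : Fin d1 → Fin d2 → Fin d3 → ℂ) :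
    frobT (mode2 T P) ≤ frobT T := by
  simpa only [← frobM_m2, m2_mode2] using frobM_mul_le_of_isStarProjection hP (m2 T)

lemma frobT_sub_mode1 (T : Fin d1 → Fin d2 → Fin d3 → ℂ) (A : Matrix (Fin d1) (Fin d1) ℂ) :
    frobT (T - mode1 T A) = frobM ((1 - A) * m1 T) := by
  rw [← frobM_m1, m1_sub, m1_mode1, Matrix.sub_mul, Matrix.one_mul]

lemma frobT_sub_mode2 (T : Fin d1 → Fin d2 → Fin d3 → ℂ) (A : Matrix (Fin d2) (Fin d2) ℂ) :
    frobT (T - mode2 T A) = frobM ((1 - A) * m2 T) := by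
  rw [← frobM_m2, m2_sub, m2_mode2, Matrix.sub_mul, Matrix.one_mul]

lemma frobT_sub_mode3 (T : Fin d1 → Fin d2 → Fin d3 → ℂ) (A : Matrix (Fin d3) (Fin d3) ℂ) :
    frobT (T - mode3 T A) = frobM ((1 - A) * m3 T) := by
  rw [← frobM_m3, m3_sub, m3_mode3, Matrix.sub_mul, Matrix.one_mul]

end ModeProducts

theorem statement17_general (n1 n2 s : ℕ)
    (PL : Matrix (Fin n1) (Fin n1) ℂ) (hPL1 : PL.conjTranspose = PL) (hPL2 : PL * PL = PL)
    (PR : Matrix (Fin n2) (Fin n2) ℂ) (hPR1 : PR.conjTranspose = PR) (hPR2 : PR * PR = PR)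
    (PV : Matrix (Fin s) (Fin s) ℂ) :
    ∀ (Zs Z0 : Fin n1 → Fin n2 → Fin s → ℂ),
      frobT (fun i1 i2 i3 =>
          Zs i1 i2 i3 - mode3 (mode2 (mode1 Z0 PL) PR) PV i1 i2 i3)
        ≤ frobM ((1 - PL) * m1 Zs) + frobM ((1 - PR) * m2 Zs) + frobM ((1 - PV) * m3 Zs)
            + frobT (mode3 (mode2 (mode1
                (fun i1 i2 i3 => Z0 i1 i2 i3 - Zs i1 i2 i3) PL) PR) PV) := by
  intro Zs Z0
  have hPL : IsStarProjection PL := ⟨hPL2, hPL1⟩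
  have hPR : IsStarProjection PR := ⟨hPR2, hPR1⟩
  have hsplit : Zs - mode3 (mode2 (mode1 Z0 PL) PR) PV
      = (Zs - mode1 Zs PL) + mode1 (Zs - mode2 Zs PR) PL
          + mode2 (mode1 (Zs - mode3 Zs PV) PL) PR
        - mode3 (mode2 (mode1 (Z0 - Zs) PL) PR) PV := by
    simp only [mode1_sub, mode2_sub, mode3_sub, mode2_mode1, mode3_mode1, mode3_mode2]
    abel
  have h1 := frobT_sub_mode1 Zs PL
  have h2 : frobT (mode1 (Zs - mode2 Zs PR) PL) ≤ frobM ((1 - PR) * m2 Zs) :=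
    (frobT_mode1_le_of_isStarProjection hPL _).trans_eq (frobT_sub_mode2 Zs PR)
  have h3 : frobT (mode2 (mode1 (Zs - mode3 Zs PV) PL) PR) ≤ frobM ((1 - PV) * m3 Zs) :=
    ((frobT_mode2_le_of_isStarProjection hPR _).trans
      (frobT_mode1_le_of_isStarProjection hPL _)).trans_eq (frobT_sub_mode3 Zs PV)
  calc frobT (Zs - mode3 (mode2 (mode1 Z0 PL) PR) PV)
      ≤ frobT (Zs - mode1 Zs PL) + frobT (mode1 (Zs - mode2 Zs PR) PL)
          + frobT (mode2 (mode1 (Zs - mode3 Zs PV) PL) PR)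
          + frobT (mode3 (mode2 (mode1 (Z0 - Zs) PL) PR) PV) := by
        rw [hsplit]
        grw [frobT_sub_le, frobT_add_le, frobT_add_le]
    _ ≤ _ := by grw [h1, h2, h3]; rfl

/-- error decomposition for the projected estimate. -/
theorem statement17 (n1 n2 s : ℕ)
    (PL : Matrix (Fin n1) (Fin n1) ℂ) (hPL1 : PL.conjTranspose = PL) (hPL2 : PL * PL = PL)
    (PR : Matrix (Fin n2) (Fin n2) ℂ) (hPR1 : PR.conjTranspose = PR) (hPR2 : PR * PR = PR)
    (PV : Matrix (Fin s) (Fin s) ℂ) (hPV1 : PV.conjTranspose = PV) (hPV2 : PV * PV = PV) :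
    ∀ (Zs Z0 : Fin n1 → Fin n2 → Fin s → ℂ),
      frobT (fun i1 i2 i3 =>
          Zs i1 i2 i3 - mode3 (mode2 (mode1 Z0 PL) PR) PV i1 i2 i3)
        ≤ frobM ((1 - PL) * m1 Zs) + frobM ((1 - PR) * m2 Zs) + frobM ((1 - PV) * m3 Zs)
            + frobT (mode3 (mode2 (mode1
                (fun i1 i2 i3 => Z0 i1 i2 i3 - Zs i1 i2 i3) PL) PR) PV) :=
  statement17_general n1 n2 s PL hPL1 hPL2 PR hPR1 hPR2 PV

end MSCS
end
end
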